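/- arXiv:2504.20916 — 2 statements merged into one kernel-verified Lean document; each statement's English description precedes it below -/
import Mathlib

section
/- Let G be a finite group, let N be a normal subgroup of G, and let ℳ₁, ℳ₂ be disjoint subsets of the set ℳ_G(N) of maximal G-normal subgroups of N. If ℳ_G(N) is minimal in itself, then for all E₁ ⊆ ℳ₁ and E₂ ⊆ ℳ₂ one has |N| / |⋂_{M ∈ E₁ ∪ E₂} M| = (|N| / |⋂_{M ∈ E₁} M|) · (|N| / |⋂_{M ∈ E₂} M|), where intersections over the empty set are taken to be N. -/
/-- `M` is a maximal `G`-normal subgroup of `U`: a normal subgroup of `G` properly contained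
in `U` such that no normal subgroup of `G` lies strictly between `M` and `U`.
`maxGNormal U` is the set of all such subgroups (denoted `ℳ_G(U)`). -/
def maxGNormal {G : Type*} [Group G] (U : Subgroup G) : Set (Subgroup G) :=
  {M | M.Normal ∧ M < U ∧ ∀ V : Subgroup G, V.Normal → M < V → ¬V < U}

/-- The set `ℳ_G(U, V)` of maximal `G`-normal subgroups of `U` that contain `V`. -/
def maxGNormalBtw {G : Type*} [Group G] (U V : Subgroup G) : Set (Subgroup G) :=
  {M | M ∈ maxGNormal U ∧ V ≤ M}

/-- The intersection of a collection `E` of subgroups (all intended to lie below `U`),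
with the convention that the intersection over the empty collection is `U`. -/
def interIn {G : Type*} [Group G] (U : Subgroup G) (E : Set (Subgroup G)) : Subgroup G :=
  U ⊓ sInf E

/-- A collection `ℳ` of (maximal `G`-normal) subgroups of `U` is a minimal subset in itself:
no proper subset `E ⊊ ℳ` has the same intersection as `ℳ` (empty intersection taken as `U`). -/
def MinimalInItself {G : Type*} [Group G] (U : Subgroup G) (ℳ : Set (Subgroup G)) : Prop :=
  ∀ E : Set (Subgroup G), E ⊂ ℳ → interIn U E ≠ interIn U ℳ

/-!
For `M ∈ ℳ_G(N)` and `E ⊆ ℳ_G(N)` with `M ∉ E`, minimality of `ℳ_G(N)` says that `⋂ E ⊄ M`: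
otherwise `M` could be dropped from `ℳ_G(N)` without changing its intersection. Since `⋂ E` is
`G`-normal and `M` is maximal `G`-normal in `N`, this forces `(⋂ E) M = N`, so
`|N : M ∩ ⋂ E| = |N : M| · |N : ⋂ E|`. Adding the members of `E₂` to `E₁` one at a time gives
the product formula, and for finite `G` the quotients of orders are these indices.
-/

namespace Subgroup

variable {G : Type*} [Group G]

theorem card_div_card_eq_relIndex {H K : Subgroup G} [Finite H] (h : H ≤ K) :
    Nat.card K / Nat.card H = H.relIndex K := by
  refine Nat.div_eq_of_eq_mul_right Nat.card_pos ?_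
  rw [← relIndex_bot_left, ← relIndex_bot_left, relIndex_mul_relIndex _ _ _ bot_le h]

theorem normal_sInf {E : Set (Subgroup G)} (hE : ∀ K ∈ E, K.Normal) : (sInf E).Normal := by
  rw [sInf_eq_iInf']
  exact normal_iInf_normal fun K => hE K K.2

theorem sup_eq_of_mem_maxGNormal {N M V : Subgroup G} (hM : M ∈ maxGNormal N) (hV : V.Normal)
    (hVN : V ≤ N) (hVM : ¬V ≤ M) : V ⊔ M = N := by
  obtain ⟨hMnormal, hMN, hmax⟩ := hM
  have hlt : M < V ⊔ M := lt_of_le_of_ne le_sup_right fun h => hVM (h ▸ le_sup_left)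
  exact (sup_le hVN hMN.le).lt_or_eq.resolve_left (hmax _ (sup_normal V M) hlt)

end Subgroup

open Subgroup

section interIn

variable {G : Type*} [Group G] {N : Subgroup G}

theorem interIn_le (E : Set (Subgroup G)) : interIn N E ≤ N := inf_le_left

theorem interIn_empty : interIn N ∅ = N := by
  simp [interIn]

theorem interIn_anti {E F : Set (Subgroup G)} (h : E ⊆ F) : interIn N F ≤ interIn N E :=
  inf_le_inf_left N (sInf_le_sInf h)

theorem interIn_insert (M : Subgroup G) (E : Set (Subgroup G)) :
    interIn N (insert M E) = M ⊓ interIn N E := by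
  simp [interIn, sInf_insert, inf_left_comm]

theorem interIn_eq_sInf {E : Set (Subgroup G)} {K : Subgroup G} (hK : K ∈ E) (hKN : K ≤ N) :
    interIn N E = sInf E :=
  inf_eq_right.mpr ((sInf_le hK).trans hKN)

end interIn

namespace MinimalInItself

variable {G : Type*} [Group G] {N : Subgroup G}

theorem interIn_not_le (hmin : MinimalInItself N (maxGNormal N)) {M : Subgroup G}
    (hM : M ∈ maxGNormal N) {E : Set (Subgroup G)} (hE : E ⊆ maxGNormal N) (hME : M ∉ E) :
    ¬interIn N E ≤ M := by
  intro hle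
  refine hmin (maxGNormal N \ {M}) (Set.sdiff_singleton_ssubset.mpr hM)
    (le_antisymm ?_ (interIn_anti Set.sdiff_subset))
  have hE' : E ⊆ maxGNormal N \ {M} := fun K hK => ⟨hE hK, fun hKM => hME (hKM ▸ hK)⟩
  conv_rhs => rw [← Set.insert_sdiff_self_of_mem hM, interIn_insert]
  exact le_inf ((interIn_anti hE').trans hle) le_rfl

theorem interIn_sup_eq (hmin : MinimalInItself N (maxGNormal N)) {M : Subgroup G}
    (hM : M ∈ maxGNormal N) {E : Set (Subgroup G)} (hE : E ⊆ maxGNormal N) (hME : M ∉ E) :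
    interIn N E ⊔ M = N := by
  rcases E.eq_empty_or_nonempty with rfl | ⟨K, hK⟩
  · rw [interIn_empty, sup_eq_left]
    exact hM.2.1.le
  · refine sup_eq_of_mem_maxGNormal hM ?_ (interIn_le E) (hmin.interIn_not_le hM hE hME)
    rw [interIn_eq_sInf hK (hE hK).2.1.le]
    exact normal_sInf fun K hK => (hE hK).1

theorem relIndex_interIn_insert (hmin : MinimalInItself N (maxGNormal N)) {M : Subgroup G}
    (hM : M ∈ maxGNormal N) {E : Set (Subgroup G)} (hE : E ⊆ maxGNormal N) (hME : M ∉ E) :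
    (interIn N (insert M E)).relIndex N = M.relIndex N * (interIn N E).relIndex N := by
  have := hM.1
  rw [interIn_insert, ← relIndex_inf_mul_relIndex, inf_eq_left.mpr (interIn_le E),
    ← relIndex_sup_right, hmin.interIn_sup_eq hM hE hME]

theorem relIndex_interIn_union (hmin : MinimalInItself N (maxGNormal N))
    {E F : Set (Subgroup G)} (hF : F.Finite) (hEM : E ⊆ maxGNormal N) (hFM : F ⊆ maxGNormal N)
    (hEF : Disjoint E F) :
    (interIn N (E ∪ F)).relIndex N = (interIn N E).relIndex N * (interIn N F).relIndex N := by
  induction F, hF using Set.Finite.induction_on with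
  | empty => simp [interIn_empty]
  | @insert M F hMF _ ih =>
    have hM : M ∈ maxGNormal N := hFM (Set.mem_insert M F)
    have hFM' : F ⊆ maxGNormal N := (Set.subset_insert M F).trans hFM
    have hME : M ∉ E := fun h => hEF.ne_of_mem h (Set.mem_insert M F) rfl
    rw [Set.union_insert, hmin.relIndex_interIn_insert hM (Set.union_subset hEM hFM')
      (by simp [hME, hMF]), ih hFM' (hEF.mono_right (Set.subset_insert M F)),
      hmin.relIndex_interIn_insert hM hFM' hMF, mul_left_comm]

end MinimalInItself

theorem stmt_2_general {G : Type*} [Group G] [Fintype G] (N : Subgroup G)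
    (ℳ₁ ℳ₂ : Set (Subgroup G)) (hℳ₁ : ℳ₁ ⊆ maxGNormal N) (hℳ₂ : ℳ₂ ⊆ maxGNormal N)
    (hdisj : Disjoint ℳ₁ ℳ₂) (hmin : MinimalInItself N (maxGNormal N)) :
    ∀ E₁ ⊆ ℳ₁, ∀ E₂ ⊆ ℳ₂,
      Nat.card N / Nat.card (interIn N (E₁ ∪ E₂)) =
        (Nat.card N / Nat.card (interIn N E₁)) * (Nat.card N / Nat.card (interIn N E₂)) := by
  intro E₁ hE₁ E₂ hE₂
  simp only [card_div_card_eq_relIndex (interIn_le _)]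
  exact hmin.relIndex_interIn_union E₂.toFinite (hE₁.trans hℳ₁) (hE₂.trans hℳ₂)
    (hdisj.mono hE₁ hE₂)

/-- Lemma 2.2(ii): if `ℳ_G(N)` is minimal in itself and `ℳ₁, ℳ₂ ⊆ ℳ_G(N)` are disjoint,
then for all `E₁ ⊆ ℳ₁` and `E₂ ⊆ ℳ₂`,
`|N| / |⋂_{M ∈ E₁ ∪ E₂} M| = (|N| / |⋂_{M ∈ E₁} M|) · (|N| / |⋂_{M ∈ E₂} M|)`. -/
theorem stmt_2 {G : Type*} [Group G] [Fintype G] (N : Subgroup G) (hN : N.Normal)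
    (ℳ₁ ℳ₂ : Set (Subgroup G)) (hℳ₁ : ℳ₁ ⊆ maxGNormal N) (hℳ₂ : ℳ₂ ⊆ maxGNormal N)
    (hdisj : Disjoint ℳ₁ ℳ₂) (hmin : MinimalInItself N (maxGNormal N)) :
    ∀ E₁ ⊆ ℳ₁, ∀ E₂ ⊆ ℳ₂,
      Nat.card N / Nat.card (interIn N (E₁ ∪ E₂)) =
        (Nat.card N / Nat.card (interIn N E₁)) * (Nat.card N / Nat.card (interIn N E₂)) :=
  stmt_2_general N ℳ₁ ℳ₂ hℳ₁ hℳ₂ hdisj hmin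
end

section
/- Let G be a finite group and let U, V be normal subgroups of G with V properly contained in U. If V cannot be expressed as an intersection of some maximal G-normal subgroups of U, then μ_G(W,U) = 0 for every normal subgroup W of G with W ⊆ V. -/
/-- The group-theoretic Möbius function `μ_G(V, U)`:
`∑_{E ⊆ ℳ_G(U,V), ⋂_{M ∈ E} M = V} (-1)^{|E|}`, empty intersection taken as `U`. -/
noncomputable def muG {G : Type*} [Group G] (V U : Subgroup G) : ℤ :=
  ∑ᶠ E ∈ {E : Set (Subgroup G) | E ⊆ maxGNormalBtw U V ∧ interIn U E = V}, (-1 : ℤ) ^ E.ncard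

/-! If `W` is an intersection of maximal `G`-normal subgroups of `U`, every normal `X` with
`W ≤ X ≤ U` has a normal complement in that interval: take `D` minimal with `X ⊔ D = U`; by the
modular law for normal subgroups, any maximal `M ⊇ W` missing `X ⊓ D` could be used to shrink `D`.
Apply this to `X = d`, the intersection of all maximal `G`-normal subgroups of `U` containing
`V ≥ W`, with complement `D`. If `V ⊔ D = U`, modularity gives `d = V ⊔ (d ⊓ D) = V`; otherwise
`V ⊔ D` lies in one of those maximal subgroups, which then contains `d ⊔ D = U`. So `V` is itself
such an intersection, and under the hypothesis the sum defining `μ_G(W, U)` is empty. -/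

namespace Subgroup

open scoped Pointwise

variable {G : Type*} [Group G]

theorem sup_inf_assoc_of_le_of_normal {A C : Subgroup G} (B : Subgroup G) [B.Normal]
    (h : A ≤ C) : (A ⊔ B) ⊓ C = A ⊔ B ⊓ C := by
  refine le_antisymm (fun x hx => ?_)
    (sup_le (le_inf le_sup_left h) (inf_le_inf_right C le_sup_right))
  have hx' : x ∈ (A : Set G) * ((B ⊓ C : Subgroup G) : Set G) := by
    rw [mul_inf_assoc A B C h, ← mul_normal]
    exact hx
  obtain ⟨a, ha, b, hb, rfl⟩ := hx'
  exact mul_mem (mem_sup_left ha) (mem_sup_right hb)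

theorem normal_sInf_s8 {S : Set (Subgroup G)} (h : ∀ M ∈ S, M.Normal) : (sInf S).Normal := by
  rw [sInf_eq_iInf']
  exact normal_iInf_normal fun M => h M M.2

end Subgroup

section MaxGNormal

open Subgroup

variable {G : Type*} [Group G] {U V X D M : Subgroup G} {E : Set (Subgroup G)}

theorem interIn_normal (hU : U.Normal) (hE : ∀ M ∈ E, M.Normal) : (interIn U E).Normal :=
  normal_inf_normal U (sInf E) (hH := hU) (hK := normal_sInf_s8 hE)

theorem interIn_le_of_mem (hM : M ∈ E) : interIn U E ≤ M :=
  inf_le_right.trans (sInf_le hM)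

theorem exists_le_mem_maxGNormal [Finite (Subgroup G)] {N : Subgroup G} (hN : N.Normal)
    (hNU : N < U) : ∃ M ∈ maxGNormal U, N ≤ M := by
  obtain ⟨M, ⟨hM, hNM, hMU⟩, hmax⟩ := Set.Finite.exists_maximalFor id
    {M : Subgroup G | M.Normal ∧ N ≤ M ∧ M < U} (Set.toFinite _) ⟨N, hN, le_rfl, hNU⟩
  refine ⟨M, ⟨hM, hMU, fun Y hY hMY hYU => hMY.ne ?_⟩, hNM⟩
  exact le_antisymm hMY.le (hmax ⟨hY, hNM.trans hMY.le, hYU⟩ hMY.le)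

theorem sup_eq_of_mem_maxGNormal (hM : M ∈ maxGNormal U) (hX : X.Normal) (hXU : X ≤ U)
    (hXM : ¬X ≤ M) : M ⊔ X = U := by
  by_contra hne
  exact hM.2.2 (M ⊔ X) (sup_normal M X (hH := hM.1) (hK := hX))
    (lt_of_le_of_ne le_sup_left fun h => hXM (h ▸ le_sup_right))
    (lt_of_le_of_ne (sup_le hM.2.1.le hXU) hne)

theorem sup_inf_eq_of_mem_maxGNormal (hM : M ∈ maxGNormal U) (hX : X.Normal) (hD : D.Normal)
    (hXU : X ≤ U) (hDU : D ≤ U) (hXD : X ⊔ D = U) (hXDM : ¬X ⊓ D ≤ M) : X ⊔ M ⊓ D = U := by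
  have := hM.1
  have hMXD : M ⊔ X ⊓ D = U :=
    sup_eq_of_mem_maxGNormal hM (normal_inf_normal X D (hH := hX) (hK := hD))
      (inf_le_left.trans hXU) hXDM
  calc X ⊔ M ⊓ D = X ⊔ (X ⊓ D ⊔ M ⊓ D) := by
        rw [← sup_assoc, sup_eq_left.2 (inf_le_left : X ⊓ D ≤ X)]
    _ = X ⊔ (X ⊓ D ⊔ M) ⊓ D := by rw [sup_inf_assoc_of_le_of_normal M inf_le_right]
    _ = X ⊔ D := by rw [sup_comm (X ⊓ D), hMXD, inf_eq_right.2 hDU]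
    _ = U := hXD

theorem exists_normal_compl [Finite (Subgroup G)] (hU : U.Normal) (hE : E ⊆ maxGNormal U)
    (hX : X.Normal) (hEX : interIn U E ≤ X) (hXU : X ≤ U) :
    ∃ D : Subgroup G, D.Normal ∧ D ≤ U ∧ X ⊓ D = interIn U E ∧ X ⊔ D = U := by
  obtain ⟨D, ⟨hD, hED, hDU, hXD⟩, hmin⟩ := Set.Finite.exists_minimalFor id
    {D : Subgroup G | D.Normal ∧ interIn U E ≤ D ∧ D ≤ U ∧ X ⊔ D = U} (Set.toFinite _)
    ⟨U, hU, inf_le_left, le_rfl, sup_eq_right.2 hXU⟩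
  refine ⟨D, hD, hDU, le_antisymm ?_ (le_inf hEX hED), hXD⟩
  refine le_inf (inf_le_left.trans hXU) (le_sInf fun M hME => ?_)
  by_contra hXDM
  have hM := hE hME
  have hDM : D ≤ M ⊓ D := hmin
    ⟨normal_inf_normal M D (hH := hM.1) (hK := hD), le_inf (interIn_le_of_mem hME) hED,
      inf_le_right.trans hDU, sup_inf_eq_of_mem_maxGNormal hM hX hD hXU hDU hXD hXDM⟩
    inf_le_right
  exact hXDM (inf_le_right.trans (hDM.trans inf_le_left))

theorem interIn_maxGNormalBtw_eq [Finite (Subgroup G)] (hU : U.Normal) (hV : V.Normal)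
    (hVU : V ≤ U) (hE : E ⊆ maxGNormal U) (hEV : interIn U E ≤ V) :
    interIn U (maxGNormalBtw U V) = V := by
  set d := interIn U (maxGNormalBtw U V)
  have hdU : d ≤ U := inf_le_left
  have hVd : V ≤ d := le_inf hVU (le_sInf fun M hM => hM.2)
  obtain ⟨D, hD, hDU, hdD, hdDU⟩ :=
    exists_normal_compl hU hE (interIn_normal hU fun M hM => hM.1.1) (hEV.trans hVd) hdU
  have := hD
  rcases (sup_le hVU hDU : V ⊔ D ≤ U).eq_or_lt with hVDU | hVDU
  · calc d = (V ⊔ D) ⊓ d := by rw [hVDU, inf_eq_right.2 hdU]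
      _ = V := by rw [sup_inf_assoc_of_le_of_normal D hVd, inf_comm, hdD, sup_eq_left.2 hEV]
  · obtain ⟨M, hM, hVDM⟩ := exists_le_mem_maxGNormal (sup_normal V D (hH := hV)) hVDU
    have hdM : d ≤ M := interIn_le_of_mem ⟨hM, le_sup_left.trans hVDM⟩
    exact absurd (hdDU ▸ sup_le hdM (le_sup_right.trans hVDM)) hM.2.1.not_ge

end MaxGNormal

/-- Lemma 3.5: if `V ⊊ U` are normal subgroups of `G` and `V` cannot be expressed as an
intersection of some (nonempty collection of) maximal `G`-normal subgroups of `U`, then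
`μ_G(W, U) = 0` for every normal subgroup `W` of `G` with `W ⊆ V`. -/
theorem stmt_8 {G : Type*} [Group G] [Fintype G] (U V : Subgroup G)
    (hU : U.Normal) (hV : V.Normal) (hlt : V < U)
    (h : ¬∃ E : Set (Subgroup G), E ⊆ maxGNormal U ∧ E.Nonempty ∧ interIn U E = V) :
    ∀ W : Subgroup G, W.Normal → W ≤ V → muG W U = 0 := by
  intro W _ hWV
  suffices {E : Set (Subgroup G) | E ⊆ maxGNormalBtw U W ∧ interIn U E = W} = ∅ by
    rw [muG, this, finsum_mem_empty]
  refine Set.eq_empty_of_forall_notMem fun E ⟨hE, hEW⟩ => h ?_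
  obtain ⟨M, hM, hVM⟩ := exists_le_mem_maxGNormal hV hlt
  exact ⟨maxGNormalBtw U V, fun M hM => hM.1, ⟨M, hM, hVM⟩,
    interIn_maxGNormalBtw_eq hU hV hlt.le (fun M hM => (hE hM).1) (hEW.trans_le hWV)⟩
end
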